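/- Let W be a type, S a subset of W, and f, g : W → [0,1]. Set A = ⨅_{w ∈ S} f w, B = ⨅_{w ∈ S} g w, and C = ⨅_{w ∈ S} ((g w ⇒ f w) ⇒ f w). Then ((B ⇒ A) ⇒ A) ≤ ((C ⇒ A) ⇒ A). (This is validity of the formula (T^<_□): ((□ψ → □φ) → □φ) → ((□((ψ → φ) → φ) → □φ) → □φ) at any world of any crisp Gödel-Kripke model.) -/
import Mathlib


open unitInterval

instance : Fact ((0:ℝ) ≤ 1) := ⟨zero_le_one⟩

noncomputable instance : CompleteLattice unitInterval := Set.Icc.completeLattice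

/-- Gödel implication on the unit interval. -/
noncomputable def gimp (a b : unitInterval) : unitInterval := if a ≤ b then 1 else b

infixr:60 " ⇒ " => gimp

/-- Gödel negation on the unit interval. -/
noncomputable def gneg (a : unitInterval) : unitInterval := a ⇒ 0

lemma gimp_antitone_left {a b c : unitInterval} (h : a ≤ b) : (b ⇒ c) ≤ (a ⇒ c) := by
  unfold gimp
  by_cases hac : a ≤ c
  · simp [hac, le_one']
  · have hbc : ¬ b ≤ c := fun hb => hac (h.trans hb)
    simp [hac, hbc]

lemma le_gimp_gimp (a b : unitInterval) : a ≤ (a ⇒ b) ⇒ b := by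
  unfold gimp
  by_cases hab : a ≤ b
  · simp only [hab, if_true]
    split_ifs
    · exact le_one'
    · exact hab
  · simp [hab, le_one']

theorem validity_Tlt_box {W : Type*} (S : Set W) (f g : W → unitInterval)
    (A B C : unitInterval)
    (hA : A = ⨅ w ∈ S, f w) (hB : B = ⨅ w ∈ S, g w)
    (hC : C = ⨅ w ∈ S, ((g w ⇒ f w) ⇒ f w)) :
    ((B ⇒ A) ⇒ A) ≤ ((C ⇒ A) ⇒ A) := by
  have hBC : B ≤ C := by
    rw [hB, hC]
    refine le_iInf₂ fun w hw => ?_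
    exact le_trans (iInf₂_le w hw) (le_gimp_gimp (g w) (f w))
  exact gimp_antitone_left (gimp_antitone_left hBC)
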